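/- Let −1 < n < 1, write n = −1 + δ with δ > 0, let 0 < κ < 1, and let m be any minimizer for f_L(n). Set A = {x ∈ Ω : −1+κ ≤ m(x) ≤ 1−κ}. Then |A|·κ²·(1−κ/2)² ≤ F(n)·L^d. In particular, if κ ≤ 2 − √2 and 0 < δ ≤ 2, then |A| ≤ 2F(n)L^d/κ² ≤ 2δ²L^d/κ². -/

import Mathlib

/-!
The constant field `m ≡ n` is admissible, so a minimizer has energy at most `F(n) L^d`.
On the transition region `|m| ≤ 1 - κ`, hence `1 - m² ≥ κ(2 - κ)` and `F(m) ≥ κ²(1 - κ/2)²`;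
dropping the gradient term and the rest of the box bounds `|A| κ²(1 - κ/2)²` by the energy.
-/

open MeasureTheory Filter

noncomputable section

/-- The double-well potential `F(m) = (1/4)(m²-1)²`. -/
def Fpot (m : ℝ) : ℝ := (1/4) * (m^2 - 1)^2

/-- The fundamental domain `[0,L)^d` of the torus of side `L`. -/
def box (d : ℕ) (L : ℝ) : Set (EuclideanSpace ℝ (Fin d)) :=
  {x | ∀ i, x i ∈ Set.Ico (0:ℝ) L}

/-- `L`-periodicity in each coordinate direction. -/
def PeriodicOn (d : ℕ) (L : ℝ) (m : EuclideanSpace ℝ (Fin d) → ℝ) : Prop :=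
  ∀ (x : EuclideanSpace ℝ (Fin d)) (i : Fin d),
    m (x + L • EuclideanSpace.single i (1:ℝ)) = m x

/-- The Cahn--Hilliard free energy functional on the torus. -/
def FE (d : ℕ) (L : ℝ) (m : EuclideanSpace ℝ (Fin d) → ℝ) : ℝ :=
  ∫ x in box d L, ((1/2) * ‖fderiv ℝ m x‖^2 + Fpot (m x))

/-- Admissible order parameter fields with mean `n`. -/
def Adm (d : ℕ) (L n : ℝ) (m : EuclideanSpace ℝ (Fin d) → ℝ) : Prop :=
  ContDiff ℝ 1 m ∧ PeriodicOn d L m ∧ (1/L^d) * (∫ x in box d L, m x) = n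

/-- The minimal free energy `f_L(n)`. -/
def fL (d : ℕ) (L n : ℝ) : ℝ :=
  sInf {e | ∃ m, Adm d L n m ∧ FE d L m = e}

/-- A minimizer for `f_L(n)`. -/
def IsMinimizer (d : ℕ) (L n : ℝ) (m : EuclideanSpace ℝ (Fin d) → ℝ) : Prop :=
  Adm d L n m ∧ FE d L m = fL d L n

/-- `σ_d`, the surface measure of the unit sphere in `ℝ^d`. -/
def sigma_d (d : ℕ) : ℝ :=
  d * (volume (Metric.ball (0 : EuclideanSpace ℝ (Fin d)) 1)).toReal

/-- The planar surface tension `S = 2^{3/2}/3`. -/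
def Sconst : ℝ := (2:ℝ) ^ ((3:ℝ)/2) / 3

/-- The compressibility `χ = 1/2`. -/
def chiConst : ℝ := 1/2

/-- The equimolar radius `r_0`. -/
def r0 (d : ℕ) (L n : ℝ) : ℝ := ((d / (2 * sigma_d d)) * (n+1)) ^ ((1:ℝ)/d) * L

/-- `|Γ_0| = σ_d r_0^{d-1}`. -/
def Gamma0 (d : ℕ) (L n : ℝ) : ℝ := sigma_d d * (r0 d L n)^(d-1)

/-- `C(n)`. -/
def Cn (d : ℕ) (L n : ℝ) : ℝ :=
  (sigma_d d / (2 * chiConst * Sconst)) * (2/(d:ℝ))^2 * ((r0 d L n)^(d+1) / L^d)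

/-- `D(K)`. -/
def Dconst (d : ℕ) (K : ℝ) : ℝ :=
  (2 / (d * chiConst * Sconst)) * (sigma_d d / d) ^ (-(1:ℝ)/d) * (K/2) ^ (((d:ℝ)+1)/d)

/-- `K_star`. -/
def Kstar (d : ℕ) : ℝ :=
  ((d:ℝ)+1) * (sigma_d d / d) ^ ((1:ℝ)/((d:ℝ)+1)) * (chiConst * Sconst / 2) ^ ((d:ℝ)/((d:ℝ)+1))

/-- Torus distance. -/
def torusDist (d : ℕ) (L : ℝ) (x y : EuclideanSpace ℝ (Fin d)) : ℝ :=
  ⨅ k : Fin d → ℤ, dist x (y + (show EuclideanSpace ℝ (Fin d) from WithLp.toLp 2 fun i => L * (k i : ℝ)))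

lemma Fpot_nonneg (t : ℝ) : 0 ≤ Fpot t := by unfold Fpot; positivity

lemma mul_sq_le_Fpot_of_mem_Icc {κ t : ℝ} (hκ : 0 ≤ κ) (ht : t ∈ Set.Icc (-1 + κ) (1 - κ)) :
    κ ^ 2 * (1 - κ / 2) ^ 2 ≤ Fpot t := by
  obtain ⟨hlo, hhi⟩ := ht
  have hgap : κ * (2 - κ) ≤ 1 - t ^ 2 := by nlinarith
  have hgap_nonneg : 0 ≤ κ * (2 - κ) := by nlinarith
  calc κ ^ 2 * (1 - κ / 2) ^ 2 = (1 / 4) * (κ * (2 - κ)) ^ 2 := by ring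
    _ ≤ (1 / 4) * (1 - t ^ 2) ^ 2 := by gcongr
    _ = Fpot t := by unfold Fpot; ring

lemma Fpot_neg_one_add_le_sq {δ : ℝ} (h0 : 0 ≤ δ) (h4 : δ ≤ 4) : Fpot (-1 + δ) ≤ δ ^ 2 := by
  have hshift : (δ - 2) ^ 2 ≤ 4 := by nlinarith
  calc Fpot (-1 + δ) = (1 / 4) * (δ ^ 2 * (δ - 2) ^ 2) := by unfold Fpot; ring
    _ ≤ (1 / 4) * (δ ^ 2 * 4) := by gcongr
    _ = δ ^ 2 := by ring

lemma half_le_one_sub_half_sq {κ : ℝ} (hκ : κ ≤ 2 - √2) :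
    1 / 2 ≤ (1 - κ / 2) ^ 2 := by
  have hsqrt : √2 ^ 2 = 2 := Real.sq_sqrt zero_le_two
  nlinarith [Real.sqrt_nonneg 2]

section Box

variable {d : ℕ} {L : ℝ}

lemma box_eq_preimage :
    box d L = (MeasurableEquiv.toLp 2 (Fin d → ℝ)).symm ⁻¹'
      (Set.univ.pi fun _ : Fin d => Set.Ico (0 : ℝ) L) := by
  ext x; simp [box, Set.mem_pi]

lemma measurableSet_box : MeasurableSet (box d L) := by
  rw [box_eq_preimage]
  exact (MeasurableEquiv.toLp 2 (Fin d → ℝ)).symm.measurable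
    (MeasurableSet.univ_pi fun _ => measurableSet_Ico)

lemma volume_box : volume (box d L) = ENNReal.ofReal L ^ d := by
  rw [box_eq_preimage,
    (EuclideanSpace.volume_preserving_symm_measurableEquiv_toLp (Fin d)).measure_preimage
      (MeasurableSet.univ_pi fun _ => measurableSet_Ico).nullMeasurableSet,
    volume_pi_pi]
  simp [Real.volume_Ico]

lemma volume_real_box (hL : 0 ≤ L) : volume.real (box d L) = L ^ d := by
  simp [measureReal_def, volume_box, ENNReal.toReal_ofReal hL]

lemma Continuous.integrableOn_box {E : Type*} [NormedAddCommGroup E]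
    {f : EuclideanSpace ℝ (Fin d) → E} (hf : Continuous f) : IntegrableOn f (box d L) := by
  have hK : IsCompact ((EuclideanSpace.equiv (Fin d) ℝ) ⁻¹' Set.Icc 0 (fun _ => L)) :=
    (EuclideanSpace.equiv (Fin d) ℝ).toHomeomorph.isCompact_preimage.2 isCompact_Icc
  exact (hf.continuousOn.integrableOn_compact hK).mono_set
    fun _ hx => ⟨fun i => (hx i).1, fun i => (hx i).2.le⟩

end Box

section Energy

variable {d : ℕ} {L : ℝ}

lemma FE_nonneg (m : EuclideanSpace ℝ (Fin d) → ℝ) : 0 ≤ FE d L m :=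
  setIntegral_nonneg measurableSet_box fun x _ => by have := Fpot_nonneg (m x); positivity

lemma FE_const (hL : 0 ≤ L) (c : ℝ) : FE d L (fun _ => c) = Fpot c * L ^ d := by
  simp [FE, volume_real_box hL, mul_comm]

lemma adm_const (hL : 0 < L) (n : ℝ) : Adm d L n (fun _ => n) := by
  refine ⟨contDiff_const, fun _ _ => rfl, ?_⟩
  rw [setIntegral_const, volume_real_box hL.le, smul_eq_mul]
  field_simp

lemma fL_le_Fpot_mul (hL : 0 < L) (n : ℝ) : fL d L n ≤ Fpot n * L ^ d := by
  rw [← FE_const hL.le n]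
  exact csInf_le ⟨0, by rintro e ⟨m, -, rfl⟩; exact FE_nonneg m⟩ ⟨_, adm_const hL n, rfl⟩

lemma setIntegral_Fpot_le_FE {m : EuclideanSpace ℝ (Fin d) → ℝ} (hm : ContDiff ℝ 1 m) :
    ∫ x in box d L, Fpot (m x) ≤ FE d L m := by
  have hgrad := hm.continuous_fderiv one_ne_zero
  have hmc := hm.continuous
  refine integral_mono (Continuous.integrableOn_box (by unfold Fpot; fun_prop))
    (Continuous.integrableOn_box (by unfold Fpot; fun_prop)) fun x => ?_
  dsimp only
  have := sq_nonneg ‖fderiv ℝ m x‖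
  linarith

lemma volume_real_transition_mul_le_FE {m : EuclideanSpace ℝ (Fin d) → ℝ} (hm : ContDiff ℝ 1 m)
    {κ : ℝ} (hκ : 0 ≤ κ) :
    volume.real {x ∈ box d L | -1 + κ ≤ m x ∧ m x ≤ 1 - κ} * (κ ^ 2 * (1 - κ / 2) ^ 2) ≤
      FE d L m := by
  set A := {x ∈ box d L | -1 + κ ≤ m x ∧ m x ≤ 1 - κ}
  have hAbox : A ⊆ box d L := fun _ hx => hx.1
  have hA : MeasurableSet A :=
    measurableSet_box.inter (measurableSet_Icc.preimage hm.continuous.measurable)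
  have hFint : IntegrableOn (fun x => Fpot (m x)) (box d L) :=
    Continuous.integrableOn_box (by unfold Fpot; fun_prop)
  calc volume.real A * (κ ^ 2 * (1 - κ / 2) ^ 2) ≤ ∫ x in A, Fpot (m x) := by
        rw [← smul_eq_mul]
        refine setIntegral_ge_of_const_le hA ?_ (fun x hx => mul_sq_le_Fpot_of_mem_Icc hκ hx.2)
          (hFint.mono_set hAbox)
        exact ((measure_mono hAbox).trans_lt (by simp [volume_box])).ne
    _ ≤ ∫ x in box d L, Fpot (m x) :=
        setIntegral_mono_set hFint (.of_forall fun x => Fpot_nonneg (m x)) hAbox.eventuallyLE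
    _ ≤ FE d L m := setIntegral_Fpot_le_FE hm

end Energy

theorem transition_region_small_general (d : ℕ) (L : ℝ) (hL : 0 < L)
    (n δ κ : ℝ) (hn : n = -1 + δ) (hδ0 : 0 < δ) (hδ2 : δ ≤ 2)
    (hκ0 : 0 < κ)
    (m : EuclideanSpace ℝ (Fin d) → ℝ) (hmin : IsMinimizer d L n m) :
    (volume {x ∈ box d L | -1 + κ ≤ m x ∧ m x ≤ 1 - κ}).toReal * κ^2 * (1 - κ/2)^2 ≤
      Fpot n * L^d ∧
    (κ ≤ 2 - Real.sqrt 2 →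
      (volume {x ∈ box d L | -1 + κ ≤ m x ∧ m x ≤ 1 - κ}).toReal ≤
          2 * Fpot n * L^d / κ^2 ∧
        2 * Fpot n * L^d / κ^2 ≤ 2 * δ^2 * L^d / κ^2) := by
  obtain ⟨⟨hm, -, -⟩, hmin⟩ := hmin
  set A := {x ∈ box d L | -1 + κ ≤ m x ∧ m x ≤ 1 - κ}
  have hmain := (volume_real_transition_mul_le_FE hm hκ0.le).trans
    (hmin.trans_le (fL_le_Fpot_mul hL n))
  rw [← measureReal_def, mul_assoc]
  refine ⟨hmain, fun hκ => ⟨?_, ?_⟩⟩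
  · rw [le_div_iff₀ (by positivity)]
    have hhalf := mul_le_mul_of_nonneg_left (half_le_one_sub_half_sq hκ)
      (mul_nonneg (measureReal_nonneg (μ := volume) (s := A)) (sq_nonneg κ))
    linarith
  · rw [hn]
    gcongr
    exact Fpot_neg_one_add_le_sq hδ0.le (by linarith)

/-- Lemma 3.4: for any minimizer `m` for `f_L(n)`, `n = -1 + δ`, the transition region
`A = {x : -1+κ ≤ m(x) ≤ 1-κ}` satisfies `|A| κ² (1-κ/2)² ≤ F(n) L^d`; in particular if
`κ ≤ 2 - √2` then `|A| ≤ 2F(n)L^d/κ² ≤ 2δ²L^d/κ²`. -/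
theorem transition_region_small (d : ℕ) (hd : 2 ≤ d) (L : ℝ) (hL : 0 < L)
    (n δ κ : ℝ) (hn : n = -1 + δ) (hδ0 : 0 < δ) (hδ2 : δ ≤ 2) (hn1 : n < 1)
    (hκ0 : 0 < κ) (hκ1 : κ < 1)
    (m : EuclideanSpace ℝ (Fin d) → ℝ) (hmin : IsMinimizer d L n m) :
    (volume {x ∈ box d L | -1 + κ ≤ m x ∧ m x ≤ 1 - κ}).toReal * κ^2 * (1 - κ/2)^2 ≤
      Fpot n * L^d ∧
    (κ ≤ 2 - Real.sqrt 2 →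
      (volume {x ∈ box d L | -1 + κ ≤ m x ∧ m x ≤ 1 - κ}).toReal ≤
          2 * Fpot n * L^d / κ^2 ∧
        2 * Fpot n * L^d / κ^2 ≤ 2 * δ^2 * L^d / κ^2) :=
  transition_region_small_general d L hL n δ κ hn hδ0 hδ2 hκ0 m hmin
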